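/- arXiv:2103.04220 — 2 statements merged into one kernel-verified Lean document; each statement's English description precedes it below -/
import Mathlib

section
/- With the Cayley parameterization U(φ) = (I_p + X_φ)(I_p - X_φ)⁻¹ I_{p×r}, for all φ, φ₀ we have the first-order expansion U(φ) - U(φ₀) = 2(I_p - X_{φ₀})⁻¹(X_φ - X_{φ₀})(I_p - X_{φ₀})⁻¹ I_{p×r} + R_U(φ, φ₀), where the remainder satisfies ‖R_U(φ, φ₀)‖_F ≤ 8 ‖φ - φ₀‖₂². -/
open Matrix

/-- Frobenius norm of a real matrix. -/
noncomputable def frobNorm {m n : Type*} [Fintype m] [Fintype n] (A : Matrix m n ℝ) : ℝ :=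
  Real.sqrt (∑ i, ∑ j, (A i j) ^ 2)

section Aux

attribute [local instance] Matrix.frobeniusSeminormedAddCommGroup
  Matrix.frobeniusNormedAddCommGroup Matrix.frobeniusNormedSpace

variable {p n m : Type*} [Fintype p] [Fintype n] [Fintype m]

lemma frobNorm_eq (A : Matrix m n ℝ) : frobNorm A = ‖A‖ := by
  rw [Matrix.frobenius_norm_def, frobNorm, Real.sqrt_eq_rpow]
  congr 1
  refine Finset.sum_congr rfl fun i _ => Finset.sum_congr rfl fun j _ => ?_
  rw [Real.rpow_two, Real.norm_eq_abs, sq_abs]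

lemma frobNorm_nonneg (A : Matrix m n ℝ) : 0 ≤ frobNorm A := Real.sqrt_nonneg _

lemma frobNorm_mul_le (A : Matrix m p ℝ) (B : Matrix p n ℝ) :
    frobNorm (A * B) ≤ frobNorm A * frobNorm B := by
  rw [frobNorm_eq, frobNorm_eq, frobNorm_eq]
  exact Matrix.frobenius_norm_mul A B

lemma frobNorm_smul (c : ℝ) (A : Matrix m n ℝ) :
    frobNorm (c • A) = |c| * frobNorm A := by
  rw [frobNorm_eq, frobNorm_eq, norm_smul, Real.norm_eq_abs]

lemma frobNorm_transpose (A : Matrix m n ℝ) : frobNorm Aᵀ = frobNorm A := by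
  rw [frobNorm_eq, frobNorm_eq]; exact Matrix.frobenius_norm_transpose A

lemma skew_cross (X : Matrix p p ℝ) (hX : Xᵀ = -X) (Y : Matrix p n ℝ) :
    ∑ i, ∑ j, Y i j * (X * Y) i j = 0 := by
  have hX' : ∀ i k, X k i = - X i k := fun i k => by
    have := congrFun (congrFun hX i) k
    simpa [Matrix.transpose_apply] using this
  have hS : (∑ i, ∑ j, Y i j * (X * Y) i j)
      = ∑ i, ∑ k, ∑ j, Y i j * X i k * Y k j := by
    refine Finset.sum_congr rfl fun i _ => ?_
    rw [Finset.sum_comm]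
    refine Finset.sum_congr rfl fun k _ => ?_
    simp only [Matrix.mul_apply, Finset.mul_sum]
    refine Finset.sum_congr rfl fun j _ => by ring
  have hneg : (∑ i, ∑ k, ∑ j, Y i j * X i k * Y k j)
      = - ∑ i, ∑ k, ∑ j, Y i j * X i k * Y k j := by
    conv_lhs => rw [Finset.sum_comm]
    rw [← Finset.sum_neg_distrib]
    refine Finset.sum_congr rfl fun i _ => ?_
    rw [← Finset.sum_neg_distrib]
    refine Finset.sum_congr rfl fun k _ => ?_
    rw [← Finset.sum_neg_distrib]
    refine Finset.sum_congr rfl fun j _ => ?_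
    rw [hX' i k]; ring
  rw [hS]
  linarith [hneg]

lemma isUnit_det_one_sub (X : Matrix p p ℝ) [DecidableEq p] (hX : Xᵀ = -X) :
    IsUnit (1 - X).det := by
  have hpos : ((1 : Matrix p p ℝ) + Xᴴ * X).PosDef :=
    Matrix.PosDef.add_posSemidef Matrix.PosDef.one
      (Matrix.posSemidef_conjTranspose_mul_self X)
  have hct : Xᴴ = Xᵀ := by
    ext i j; simp [Matrix.conjTranspose_apply]
  have hmul : (1 + X) * (1 - X) = (1 : Matrix p p ℝ) + Xᴴ * X := by
    rw [hct, hX]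
    noncomm_ring
  have hdet : (1 + X).det * (1 - X).det ≠ 0 := by
    rw [← Matrix.det_mul, hmul]
    exact ne_of_gt hpos.det_pos
  exact isUnit_iff_ne_zero.mpr (right_ne_zero_of_mul hdet)

lemma frob_inv_mul_le (X : Matrix p p ℝ) [DecidableEq p] (hX : Xᵀ = -X)
    (B : Matrix p n ℝ) : frobNorm ((1 - X)⁻¹ * B) ≤ frobNorm B := by
  have hu := isUnit_det_one_sub X hX
  set Y := (1 - X)⁻¹ * B with hY
  have hB : B = Y - X * Y := by
    have : (1 - X) * Y = B := by
      rw [hY, ← Matrix.mul_assoc, Matrix.mul_nonsing_inv _ hu, Matrix.one_mul]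
    calc B = (1 - X) * Y := this.symm
      _ = Y - X * Y := by rw [Matrix.sub_mul, Matrix.one_mul]
  have expand : ∑ i, ∑ j, (B i j) ^ 2
      = (∑ i, ∑ j, (Y i j) ^ 2) + ∑ i, ∑ j, ((X * Y) i j) ^ 2 := by
    have cross := skew_cross X hX Y
    have h1 : ∀ i j, (B i j) ^ 2
        = (Y i j) ^ 2 - 2 * (Y i j * (X * Y) i j) + ((X * Y) i j) ^ 2 := by
      intro i j
      rw [hB, Matrix.sub_apply]
      ring
    calc ∑ i, ∑ j, (B i j) ^ 2
        = ∑ i, ∑ j, ((Y i j) ^ 2 - 2 * (Y i j * (X * Y) i j) + ((X * Y) i j) ^ 2) := by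
          exact Finset.sum_congr rfl fun i _ => Finset.sum_congr rfl fun j _ => h1 i j
      _ = (∑ i, ∑ j, (Y i j) ^ 2) - 2 * (∑ i, ∑ j, Y i j * (X * Y) i j)
            + ∑ i, ∑ j, ((X * Y) i j) ^ 2 := by
          simp [Finset.sum_add_distrib, Finset.sum_sub_distrib, Finset.mul_sum]
      _ = _ := by rw [cross]; ring
  rw [frobNorm, frobNorm]
  apply Real.sqrt_le_sqrt
  rw [expand]
  have : 0 ≤ ∑ i, ∑ j, ((X * Y) i j) ^ 2 :=
    Finset.sum_nonneg fun i _ => Finset.sum_nonneg fun j _ => sq_nonneg _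
  linarith

lemma frob_mul_inv_le (X : Matrix p p ℝ) [DecidableEq p] (hX : Xᵀ = -X)
    (B : Matrix n p ℝ) : frobNorm (B * (1 - X)⁻¹) ≤ frobNorm B := by
  have hXneg : (-X)ᵀ = -(-X) := by rw [Matrix.transpose_neg, hX, neg_neg]
  have htr : (B * (1 - X)⁻¹)ᵀ = (1 - -X)⁻¹ * Bᵀ := by
    rw [Matrix.transpose_mul, Matrix.transpose_nonsing_inv, Matrix.transpose_sub,
      Matrix.transpose_one, hX, sub_neg_eq_add]
  calc frobNorm (B * (1 - X)⁻¹) = frobNorm ((B * (1 - X)⁻¹)ᵀ) :=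
        (frobNorm_transpose _).symm
    _ = frobNorm ((1 - -X)⁻¹ * Bᵀ) := by rw [htr]
    _ ≤ frobNorm Bᵀ := frob_inv_mul_le (-X) hXneg Bᵀ
    _ = frobNorm B := frobNorm_transpose B

end Aux

/-- The skew-symmetric block matrix `X_φ = [[0, -Aᵀ],[A, 0]]` built from `A`. -/
noncomputable def Xmat {n1 n2 : Type*} (A : Matrix n2 n1 ℝ) :
    Matrix (n1 ⊕ n2) (n1 ⊕ n2) ℝ :=
  Matrix.fromBlocks 0 (-Aᵀ) A 0

/-- The matrix `I_{p×r}` consisting of the first `r` columns of the identity. -/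
noncomputable def IprM (n1 n2 : Type*) [DecidableEq n1] : Matrix (n1 ⊕ n2) n1 ℝ :=
  Matrix.of (Sum.elim (fun i j => if i = j then (1 : ℝ) else 0) (fun _ _ => 0))

/-- The Cayley parameterization `U(φ) = (I + X_φ)(I - X_φ)⁻¹ I_{p×r}`. -/
noncomputable def CayleyU {n1 n2 : Type*} [Fintype n1] [Fintype n2]
    [DecidableEq n1] [DecidableEq n2] (A : Matrix n2 n1 ℝ) : Matrix (n1 ⊕ n2) n1 ℝ :=
  (1 + Xmat A) * (1 - Xmat A)⁻¹ * IprM n1 n2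

section Aux2

variable {m n1 n2 : Type*} [Fintype m] [Fintype n1] [Fintype n2]

lemma Xmat_skew (A : Matrix n2 n1 ℝ) : (Xmat A)ᵀ = -(Xmat A) := by
  simp [Xmat, Matrix.fromBlocks_transpose, Matrix.fromBlocks_neg]

lemma Xmat_sub (A A₀ : Matrix n2 n1 ℝ) : Xmat A - Xmat A₀ = Xmat (A - A₀) := by
  ext i j
  cases i <;> cases j <;>
    simp [Xmat, Matrix.fromBlocks, Matrix.sub_apply, Matrix.transpose_apply] <;> ring

lemma frob_mul_Ipr_le [DecidableEq n1] (M : Matrix m (n1 ⊕ n2) ℝ) :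
    frobNorm (M * IprM n1 n2) ≤ frobNorm M := by
  have happ : ∀ i j, (M * IprM n1 n2) i j = M i (Sum.inl j) := by
    intro i j
    simp [Matrix.mul_apply, IprM, Fintype.sum_sum_type]
  rw [frobNorm, frobNorm]
  apply Real.sqrt_le_sqrt
  refine Finset.sum_le_sum fun i _ => ?_
  calc ∑ j, ((M * IprM n1 n2) i j) ^ 2 = ∑ j, (M i (Sum.inl j)) ^ 2 := by
        exact Finset.sum_congr rfl fun j _ => by rw [happ]
    _ ≤ ∑ k, (M i k) ^ 2 := by
        rw [Fintype.sum_sum_type]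
        have : 0 ≤ ∑ b : n2, (M i (Sum.inr b)) ^ 2 :=
          Finset.sum_nonneg fun b _ => sq_nonneg _
        linarith

lemma sum_sq_Xmat (D : Matrix n2 n1 ℝ) :
    ∑ i, ∑ j, (Xmat D i j) ^ 2 = 2 * ∑ i, ∑ j, (D i j) ^ 2 := by
  rw [Fintype.sum_sum_type]
  simp only [Fintype.sum_sum_type]
  simp only [Xmat, Matrix.fromBlocks_apply₁₁, Matrix.fromBlocks_apply₁₂,
    Matrix.fromBlocks_apply₂₁, Matrix.fromBlocks_apply₂₂, Matrix.neg_apply,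
    Matrix.transpose_apply, Matrix.zero_apply, neg_sq]
  simp only [ne_eq, OfNat.ofNat_ne_zero, not_false_eq_true, zero_pow,
    Finset.sum_const_zero, zero_add, add_zero]
  rw [Finset.sum_comm]
  ring

lemma frobNorm_Xmat_sq (D : Matrix n2 n1 ℝ) :
    frobNorm (Xmat D) * frobNorm (Xmat D) = 2 * frobNorm D ^ 2 := by
  have h1 : 0 ≤ ∑ i, ∑ j, (Xmat D i j) ^ 2 :=
    Finset.sum_nonneg fun i _ => Finset.sum_nonneg fun j _ => sq_nonneg _
  have h2 : 0 ≤ ∑ i, ∑ j, (D i j) ^ 2 :=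
    Finset.sum_nonneg fun i _ => Finset.sum_nonneg fun j _ => sq_nonneg _
  rw [frobNorm, frobNorm, Real.mul_self_sqrt h1, Real.sq_sqrt h2, sum_sq_Xmat]

end Aux2

lemma cayley_abstract {p n : Type*} [Fintype p] [Fintype n] [DecidableEq p]
    (M N D : Matrix p p ℝ) (J : Matrix p n ℝ)
    (hZ : ∀ Z : Matrix p n ℝ, M * (D * (N * Z)) = M * Z - N * Z) :
    ((2 : ℝ) • M - 1) * J - ((2 : ℝ) • N - 1) * J - (2 : ℝ) • (N * D * N * J)
      = (2 : ℝ) • (M * (D * (N * (D * (N * J))))) := by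
  rw [hZ (D * (N * J)), hZ J]
  simp only [Matrix.sub_mul, Matrix.one_mul, smul_mul_assoc, Matrix.smul_mul,
    Matrix.mul_assoc, smul_sub]
  abel

/-- first-order expansion of the Cayley parameterization:
`U(φ) - U(φ₀) = 2(I - X_{φ₀})⁻¹(X_φ - X_{φ₀})(I - X_{φ₀})⁻¹ I_{p×r} + R_U(φ,φ₀)`
with `‖R_U(φ,φ₀)‖_F ≤ 8‖φ - φ₀‖₂²` (recall `‖φ - φ₀‖₂ = ‖A - A₀‖_F`). -/
theorem cayley_first_order_expansion
    {n1 n2 : Type*} [Fintype n1] [Fintype n2] [DecidableEq n1] [DecidableEq n2]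
    (A A₀ : Matrix n2 n1 ℝ) :
    frobNorm (CayleyU A - CayleyU A₀
        - (2 : ℝ) • ((1 - Xmat A₀)⁻¹ * (Xmat A - Xmat A₀) * (1 - Xmat A₀)⁻¹ * IprM n1 n2))
      ≤ 8 * frobNorm (A - A₀) ^ 2 := by
  have hXs : (Xmat A)ᵀ = -(Xmat A) := Xmat_skew A
  have hX₀s : (Xmat A₀)ᵀ = -(Xmat A₀) := Xmat_skew A₀
  have huA : IsUnit (1 - Xmat A).det := isUnit_det_one_sub _ hXs
  have huA₀ : IsUnit (1 - Xmat A₀).det := isUnit_det_one_sub _ hX₀s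
  set X := Xmat A with hXdef
  set X₀ := Xmat A₀ with hX₀def
  set M := (1 - X)⁻¹ with hMdef
  set N := (1 - X₀)⁻¹ with hNdef
  set D := X - X₀ with hDdef
  set J := IprM n1 n2 with hJdef
  have h1A : (1 + X) * M = (2 : ℝ) • M - 1 := by
    have h2 : (1 : Matrix (n1 ⊕ n2) (n1 ⊕ n2) ℝ) + X
        = (2 : ℝ) • (1 : Matrix (n1 ⊕ n2) (n1 ⊕ n2) ℝ) - (1 - X) := by
      rw [two_smul]; abel
    rw [h2, Matrix.sub_mul, smul_mul_assoc, Matrix.one_mul, hMdef,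
      Matrix.mul_nonsing_inv _ huA]
  have h1A₀ : (1 + X₀) * N = (2 : ℝ) • N - 1 := by
    have h2 : (1 : Matrix (n1 ⊕ n2) (n1 ⊕ n2) ℝ) + X₀
        = (2 : ℝ) • (1 : Matrix (n1 ⊕ n2) (n1 ⊕ n2) ℝ) - (1 - X₀) := by
      rw [two_smul]; abel
    rw [h2, Matrix.sub_mul, smul_mul_assoc, Matrix.one_mul, hNdef,
      Matrix.mul_nonsing_inv _ huA₀]
  have hMN : M - N = M * D * N := by
    have hD : D = (1 - X₀) - (1 - X) := by rw [hDdef]; abel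
    calc M - N
        = M * ((1 - X₀) * N) - M * (1 - X) * N := by
          rw [hMdef, hNdef, Matrix.mul_nonsing_inv _ huA₀, Matrix.mul_one,
            Matrix.nonsing_inv_mul _ huA, Matrix.one_mul]
      _ = M * (((1 - X₀) - (1 - X)) * N) := by
          simp only [Matrix.sub_mul, Matrix.mul_sub, Matrix.mul_assoc, Matrix.one_mul]
          all_goals abel
      _ = M * D * N := by rw [← hD, Matrix.mul_assoc]
  have hZ : ∀ Z : Matrix (n1 ⊕ n2) n1 ℝ, M * (D * (N * Z)) = M * Z - N * Z := by
    intro Z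
    calc M * (D * (N * Z)) = (M * D * N) * Z := by simp only [Matrix.mul_assoc]
      _ = (M - N) * Z := by rw [← hMN]
      _ = M * Z - N * Z := Matrix.sub_mul _ _ _
  have halg : CayleyU A - CayleyU A₀ - (2 : ℝ) • (N * D * N * J)
      = (2 : ℝ) • (M * (D * (N * (D * (N * J))))) := by
    have hCA : CayleyU A = ((2 : ℝ) • M - 1) * J := by
      rw [CayleyU, ← hXdef, ← hMdef, ← hJdef, h1A]
    have hCA₀ : CayleyU A₀ = ((2 : ℝ) • N - 1) * J := by
      rw [CayleyU, ← hX₀def, ← hNdef, ← hJdef, h1A₀]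
    rw [hCA, hCA₀]
    exact cayley_abstract M N D J hZ
  have c1 : frobNorm (M * (D * (N * (D * (N * J)))))
      ≤ frobNorm (D * (N * (D * (N * J)))) := frob_inv_mul_le X hXs _
  have c2 : frobNorm (D * (N * (D * (N * J))))
      ≤ frobNorm D * frobNorm (N * (D * (N * J))) := frobNorm_mul_le _ _
  have c3 : frobNorm (N * (D * (N * J))) ≤ frobNorm (D * (N * J)) :=
    frob_inv_mul_le X₀ hX₀s _
  have c4 : frobNorm (D * (N * J)) = frobNorm ((D * N) * J) := by
    rw [Matrix.mul_assoc]
  have c5 : frobNorm ((D * N) * J) ≤ frobNorm (D * N) := frob_mul_Ipr_le _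
  have c6 : frobNorm (D * N) ≤ frobNorm D := frob_mul_inv_le X₀ hX₀s D
  have hd0 : 0 ≤ frobNorm D := frobNorm_nonneg D
  have step : frobNorm (N * (D * (N * J))) ≤ frobNorm D :=
    le_trans c3 (le_trans (le_of_eq c4) (le_trans c5 c6))
  have main : frobNorm (M * (D * (N * (D * (N * J))))) ≤ frobNorm D * frobNorm D :=
    le_trans c1 (le_trans c2 (mul_le_mul_of_nonneg_left step hd0))
  have hD2 : frobNorm D * frobNorm D = 2 * frobNorm (A - A₀) ^ 2 := by
    rw [hDdef, hXdef, hX₀def, Xmat_sub]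
    exact frobNorm_Xmat_sq (A - A₀)
  have hsmul : frobNorm ((2 : ℝ) • (M * (D * (N * (D * (N * J))))))
      = 2 * frobNorm (M * (D * (N * (D * (N * J))))) := by
    rw [frobNorm_smul]
    norm_num
  rw [halg, hsmul]
  have hf2 : 0 ≤ frobNorm (A - A₀) ^ 2 := sq_nonneg _
  linarith
end

section
/- Let A ∈ ℝ^{(p-r)×r}, φ = vec(A), and let X_φ be the skew-symmetric block matrix [[0, -Aᵀ],[A, 0]]. Let C₀ = (I_p - X₀)⁻¹ for some fixed skew-symmetric X₀ of the same block form with ‖A₀‖₂ < 1, U₀ = C₀⁻ᵀ C₀ I_{p×r}, and write C₀ in 2×2 blocks C₁₁, C₁₂, C₂₁, C₂₂. Then vec(X_φ)ᵀ (C₀ᵀ ⊗ C₀ᵀ) { U₀U₀ᵀ ⊗ (I_p - U₀U₀ᵀ) } (C₀ ⊗ C₀) vec(X_φ) = ‖C₂₂ᵀ A C₁₁ - C₁₂ᵀ Aᵀ C₂₁‖_F². -/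
open Matrix
open scoped Kronecker

/-- Spectral norm (largest singular value) of a real matrix. -/
noncomputable def specNorm {m n : Type*} [Fintype m] [Fintype n] [DecidableEq n]
    (A : Matrix m n ℝ) : ℝ :=
  ‖LinearMap.toContinuousLinearMap (Matrix.toEuclideanLin A)‖

section Aux

set_option linter.unusedSectionVars false

variable {n1 n2 : Type*} [Fintype n1] [Fintype n2] [DecidableEq n1] [DecidableEq n2]

lemma Xmat_mul_Xmat (A₀ : Matrix n2 n1 ℝ) :
    Xmat A₀ * Xmat A₀ = fromBlocks (-(A₀ᵀ * A₀)) 0 0 (-(A₀ * A₀ᵀ)) := by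
  simp [Xmat, fromBlocks_multiply]

lemma Xmat_transpose (A₀ : Matrix n2 n1 ℝ) : (Xmat A₀)ᵀ = -Xmat A₀ := by
  simp [Xmat, fromBlocks_transpose, fromBlocks_neg]

lemma isUnit_det_one_sub_Xmat (A₀ : Matrix n2 n1 ℝ) : IsUnit (1 - Xmat A₀).det := by
  have h1 : (1 + Xmat A₀) * (1 - Xmat A₀)
      = fromBlocks (1 + A₀ᵀ * A₀) 0 0 (1 + A₀ * A₀ᵀ) := by
    have h : (1 + Xmat A₀) * (1 - Xmat A₀) = 1 - Xmat A₀ * Xmat A₀ := by noncomm_ring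
    rw [h, Xmat_mul_Xmat, ← fromBlocks_one, sub_eq_add_neg, fromBlocks_neg, fromBlocks_add]
    simp [sub_eq_add_neg]
  have hP1 : (1 + A₀ᵀ * A₀).PosDef :=
    Matrix.PosDef.add_posSemidef Matrix.PosDef.one
      (by simpa [conjTranspose_eq_transpose_of_trivial] using
        Matrix.posSemidef_conjTranspose_mul_self A₀)
  have hP2 : (1 + A₀ * A₀ᵀ).PosDef :=
    Matrix.PosDef.add_posSemidef Matrix.PosDef.one
      (by simpa [conjTranspose_eq_transpose_of_trivial] using
        Matrix.posSemidef_self_mul_conjTranspose A₀)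
  have hdet : (1 + Xmat A₀).det * (1 - Xmat A₀).det
      = (1 + A₀ᵀ * A₀).det * (1 + A₀ * A₀ᵀ).det := by
    rw [← det_mul, h1, det_fromBlocks_zero₂₁]
  have hne : (1 - Xmat A₀).det ≠ 0 := by
    intro h
    rw [h, mul_zero] at hdet
    exact absurd hdet.symm (ne_of_gt (mul_pos hP1.det_pos hP2.det_pos))
  exact isUnit_iff_ne_zero.mpr hne

lemma dot_kron {p : Type*} [Fintype p] (X L N : Matrix p p ℝ) :
    (fun q : p × p => X q.2 q.1) ⬝ᵥ ((L ⊗ₖ N) *ᵥ fun q : p × p => X q.2 q.1)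
      = Matrix.trace (Xᵀ * N * X * Lᵀ) := by
  simp only [dotProduct, mulVec, Matrix.trace, Matrix.diag_apply, Matrix.mul_apply,
    kroneckerMap_apply, transpose_apply, Fintype.sum_prod_type]
  simp only [Finset.mul_sum, Finset.sum_mul]
  refine Finset.sum_congr rfl fun x _ => ?_
  rw [Finset.sum_comm]
  refine Finset.sum_congr rfl fun b _ => ?_
  rw [Finset.sum_comm]
  exact Finset.sum_congr rfl fun c _ => Finset.sum_congr rfl fun a _ => by ring

lemma IprM_mul_transpose :
    IprM n1 n2 * (IprM n1 n2)ᵀ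
      = fromBlocks (1 : Matrix n1 n1 ℝ) 0 0 (0 : Matrix n2 n2 ℝ) := by
  ext i k
  cases i <;> cases k <;>
    simp [IprM, Matrix.mul_apply, fromBlocks, Matrix.one_apply, Finset.sum_ite_eq]

lemma trace_block (Y : Matrix (n1 ⊕ n2) (n1 ⊕ n2) ℝ) :
    Matrix.trace (Yᵀ * fromBlocks (0 : Matrix n1 n1 ℝ) 0 0 (1 : Matrix n2 n2 ℝ) * Y
        * fromBlocks (1 : Matrix n1 n1 ℝ) 0 0 (0 : Matrix n2 n2 ℝ))
      = ∑ i, ∑ j, (Y.toBlocks₂₁ i j) ^ 2 := by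
  conv_lhs => rw [← fromBlocks_toBlocks Y]
  rw [fromBlocks_transpose, fromBlocks_multiply, fromBlocks_multiply, fromBlocks_multiply]
  simp only [Matrix.mul_zero, Matrix.zero_mul, Matrix.mul_one, Matrix.one_mul,
    add_zero, zero_add, Matrix.trace, Matrix.diag_apply, Fintype.sum_sum_type,
    fromBlocks_apply₁₁, fromBlocks_apply₂₂, Matrix.mul_apply, transpose_apply,
    Matrix.zero_apply]
  rw [Finset.sum_comm]
  simp [sq]

end Aux

/-- with `C₀ = (I - X₀)⁻¹`, `U₀ = C₀⁻ᵀC₀ I_{p×r}`, `P = U₀U₀ᵀ`, and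
`v = vec(X_φ)` (column-major), the quadratic form
`vec(X_φ)ᵀ (C₀ᵀ ⊗ C₀ᵀ)(P ⊗ (I - P))(C₀ ⊗ C₀) vec(X_φ)` equals
`‖C₂₂ᵀ A C₁₁ - C₁₂ᵀ Aᵀ C₂₁‖_F²` where `Cᵢⱼ` are the blocks of `C₀`. -/
theorem kronecker_quadratic_form_eq_block_frobenius
    {n1 n2 : Type*} [Fintype n1] [Fintype n2] [DecidableEq n1] [DecidableEq n2]
    (A A₀ : Matrix n2 n1 ℝ) (hA0 : specNorm A₀ < 1) :
    let C : Matrix (n1 ⊕ n2) (n1 ⊕ n2) ℝ := (1 - Xmat A₀)⁻¹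
    let U₀ : Matrix (n1 ⊕ n2) n1 ℝ := (Cᵀ)⁻¹ * C * IprM n1 n2
    let P : Matrix (n1 ⊕ n2) (n1 ⊕ n2) ℝ := U₀ * U₀ᵀ
    let v : (n1 ⊕ n2) × (n1 ⊕ n2) → ℝ := fun q => Xmat A q.2 q.1
    v ⬝ᵥ (((Cᵀ ⊗ₖ Cᵀ) * (P ⊗ₖ (1 - P)) * (C ⊗ₖ C)) *ᵥ v)
      = frobNorm ((C.toBlocks₂₂)ᵀ * A * C.toBlocks₁₁
          - (C.toBlocks₁₂)ᵀ * Aᵀ * C.toBlocks₂₁) ^ 2 := by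
  intro C U₀ P v
  have hCdef : C = (1 - Xmat A₀)⁻¹ := rfl
  have hX0 : IsUnit (1 - Xmat A₀).det := isUnit_det_one_sub_Xmat A₀
  have hC : IsUnit C.det := Matrix.isUnit_nonsing_inv_det _ hX0
  have hCT : IsUnit Cᵀ.det := by rwa [Matrix.det_transpose]
  set J : Matrix (n1 ⊕ n2) n1 ℝ := IprM n1 n2 with hJdef
  set E : Matrix (n1 ⊕ n2) (n1 ⊕ n2) ℝ := J * Jᵀ with hEdef
  have h1 : Cᵀ * (Cᵀ)⁻¹ = 1 := Matrix.mul_nonsing_inv _ hCT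
  have h2 : C⁻¹ * C = 1 := Matrix.nonsing_inv_mul _ hC
  have hinv : ((Cᵀ)⁻¹)ᵀ = C⁻¹ := by
    rw [Matrix.transpose_nonsing_inv, Matrix.transpose_transpose]
  have hU₀T : U₀ᵀ = Jᵀ * (Cᵀ * C⁻¹) := by
    have hh : U₀ = (Cᵀ)⁻¹ * C * J := rfl
    rw [hh, Matrix.transpose_mul, Matrix.transpose_mul, hinv]
  have key1 : Cᵀ * P * C = C * E * Cᵀ := by
    have hh : P = (Cᵀ)⁻¹ * C * J * U₀ᵀ := rfl
    rw [hh, hU₀T]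
    simp only [Matrix.mul_assoc]
    rw [← Matrix.mul_assoc Cᵀ (Cᵀ)⁻¹, h1, Matrix.one_mul, h2, Matrix.mul_one, hEdef]
    simp only [Matrix.mul_assoc]
  have hCTeq : Cᵀ = (1 + Xmat A₀)⁻¹ := by
    show ((1 - Xmat A₀)⁻¹)ᵀ = _
    rw [Matrix.transpose_nonsing_inv]
    congr 1
    rw [Matrix.transpose_sub, Matrix.transpose_one, Xmat_transpose, sub_neg_eq_add]
  have hswap : (1 + Xmat A₀) * (1 - Xmat A₀) = (1 - Xmat A₀) * (1 + Xmat A₀) := by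
    noncomm_ring
  have hcomm : C * Cᵀ = Cᵀ * C := by
    rw [hCTeq, hCdef, ← Matrix.mul_inv_rev, ← Matrix.mul_inv_rev, hswap]
  have key2 : Cᵀ * (1 - P) * C = C * (1 - E) * Cᵀ := by
    rw [Matrix.mul_sub, Matrix.sub_mul, Matrix.mul_sub, Matrix.sub_mul, key1]
    simp only [Matrix.mul_one]
    rw [hcomm]
  have hM : (Cᵀ ⊗ₖ Cᵀ) * (P ⊗ₖ (1 - P)) * (C ⊗ₖ C)
      = (Cᵀ * P * C) ⊗ₖ (Cᵀ * (1 - P) * C) := by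
    rw [← Matrix.mul_kronecker_mul, ← Matrix.mul_kronecker_mul]
  have hvdef : v = fun q : (n1 ⊕ n2) × (n1 ⊕ n2) => Xmat A q.2 q.1 := rfl
  rw [hM, key1, key2, hvdef, dot_kron]
  -- transpose of C * E * Cᵀ
  have hEsymm : Eᵀ = E := by
    rw [hEdef, Matrix.transpose_mul, Matrix.transpose_transpose]
  have hLT : (C * E * Cᵀ)ᵀ = C * E * Cᵀ := by
    rw [Matrix.transpose_mul, Matrix.transpose_mul, Matrix.transpose_transpose, hEsymm,
      hEdef]
    simp only [Matrix.mul_assoc]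
  rw [hLT]
  -- reduce to Y-form
  set X := Xmat A with hXdef
  set Y : Matrix (n1 ⊕ n2) (n1 ⊕ n2) ℝ := Cᵀ * X * C with hYdef
  have hYT : Yᵀ = Cᵀ * Xᵀ * C := by
    rw [hYdef, Matrix.transpose_mul, Matrix.transpose_mul, Matrix.transpose_transpose,
      Matrix.mul_assoc]
  have htr : Xᵀ * (C * (1 - E) * Cᵀ) * X * (C * E * Cᵀ)
      = (Xᵀ * (C * (1 - E) * Cᵀ) * X * (C * E)) * Cᵀ := by
    simp only [Matrix.mul_assoc]
  rw [htr, Matrix.trace_mul_comm]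
  have htr2 : Cᵀ * (Xᵀ * (C * (1 - E) * Cᵀ) * X * (C * E)) = Yᵀ * (1 - E) * Y * E := by
    rw [hYT, hYdef]
    simp only [Matrix.mul_assoc]
  rw [htr2]
  -- block form of E
  have hEfb : E = fromBlocks (1 : Matrix n1 n1 ℝ) 0 0 (0 : Matrix n2 n2 ℝ) := by
    rw [hEdef, hJdef]; exact IprM_mul_transpose
  have hE2fb : (1 : Matrix (n1 ⊕ n2) (n1 ⊕ n2) ℝ) - E
      = fromBlocks (0 : Matrix n1 n1 ℝ) 0 0 (1 : Matrix n2 n2 ℝ) := by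
    rw [hEfb, ← fromBlocks_one, sub_eq_add_neg, fromBlocks_neg, fromBlocks_add]
    simp
  rw [hE2fb, hEfb, trace_block]
  -- compute the 2,1 block of Y
  have hY21 : Y.toBlocks₂₁
      = (C.toBlocks₂₂)ᵀ * A * C.toBlocks₁₁ - (C.toBlocks₁₂)ᵀ * Aᵀ * C.toBlocks₂₁ := by
    have hCb : C = fromBlocks C.toBlocks₁₁ C.toBlocks₁₂ C.toBlocks₂₁ C.toBlocks₂₂ :=
      (fromBlocks_toBlocks C).symm
    rw [hYdef, hXdef]
    conv_lhs => rw [hCb]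
    rw [Xmat, fromBlocks_transpose, fromBlocks_multiply, fromBlocks_multiply,
      toBlocks_fromBlocks₂₁]
    simp only [Matrix.mul_zero, Matrix.zero_mul, add_zero, zero_add, Matrix.mul_neg,
      Matrix.neg_mul]
    rw [sub_eq_add_neg]
  rw [hY21, frobNorm, Real.sq_sqrt (by positivity)]
end
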